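/- arXiv:1706.05624 — 7 statements merged into one kernel-verified Lean document; each statement's English description precedes it below -/
import Mathlib

section
/- Let G be an abelian group, M ⊆ G a submonoid, and u ∈ M an order unit, i.e. M + ℤu = G. If g ∈ G satisfies φ(g) > 0 for every pure state φ of (G, M, u), then kg ∈ M for some positive integer k. -/
/-- A state of `(G, M, u)`: an additive map to `ℝ`, nonnegative on `M`, sending `u` to `1`. -/
def IsState {G : Type*} [AddCommGroup G] (M : AddSubmonoid G) (u : G) (φ : G →+ ℝ) : Prop :=
  (∀ m ∈ M, 0 ≤ φ m) ∧ φ u = 1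

/-- A pure state: a state `φ` such that `2φ = φ₁ + φ₂` for states `φ₁, φ₂` forces
`φ = φ₁ = φ₂`. -/
def IsPureState {G : Type*} [AddCommGroup G] (M : AddSubmonoid G) (u : G) (φ : G →+ ℝ) : Prop :=
  IsState M u φ ∧ ∀ φ₁ φ₂ : G →+ ℝ, IsState M u φ₁ → IsState M u φ₂ →
    φ + φ = φ₁ + φ₂ → φ₁ = φ ∧ φ₂ = φ

open Set Submodule

namespace GHAux

variable {G : Type*} [AddCommGroup G] {M : AddSubmonoid G} {u : G}

lemma zsmul_mem_of_nonneg {x : G} (hx : x ∈ M) {n : ℤ} (hn : 0 ≤ n) : n • x ∈ M := by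
  lift n to ℕ using hn
  rw [natCast_zsmul]
  exact AddSubmonoid.nsmul_mem M hx n

lemma coef_nonneg (hu : u ∈ M) (hneg : -u ∉ M) {k : ℤ} (hk : k • u ∈ M) : 0 ≤ k := by
  by_contra hlt
  push_neg at hlt
  apply hneg
  have h2 : (-1 - k) • u ∈ M := zsmul_mem_of_nonneg hu (by omega)
  have : k • u + (-1 - k) • u = -u := by
    rw [← add_smul]; ring_nf; rw [neg_smul, one_smul]
  rw [← this]
  exact M.add_mem hk h2

/-- The set of rational upper slopes for `x`. -/
def pSet (M : AddSubmonoid G) (u x : G) : Set ℝ :=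
  {r | ∃ (k n : ℤ), 0 < n ∧ r = (k : ℝ) / (n : ℝ) ∧ k • u - n • x ∈ M}

variable (horder : ∀ g : G, ∃ (k : ℤ) (m : G), m ∈ M ∧ g = m + k • u)

include horder in
lemma pSet_nonempty (x : G) : (pSet M u x).Nonempty := by
  obtain ⟨j, m, hm, hrep⟩ := horder (-x)
  refine ⟨(-j : ℤ), (-j : ℤ), 1, one_pos, by push_cast; ring, ?_⟩
  have hx : x = -(m + j • u) := by rw [← hrep, neg_neg]
  have : (-j) • u - (1 : ℤ) • x = m := by rw [one_smul, neg_smul, hx]; abel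
  rwa [this]

end GHAux

namespace GHAux

variable {G : Type*} [AddCommGroup G] {M : AddSubmonoid G} {u : G}
variable (horder : ∀ g : G, ∃ (k : ℤ) (m : G), m ∈ M ∧ g = m + k • u)

include horder in
lemma pSet_lower (hu : u ∈ M) (hneg : -u ∉ M) (x : G) :
    ∃ c : ℝ, ∀ r ∈ pSet M u x, c ≤ r := by
  obtain ⟨k₁, m, hm, hrep⟩ := horder x
  refine ⟨(k₁ : ℝ), ?_⟩
  rintro r ⟨k, n, hn, rfl, hmem⟩
  have hxm : x - k₁ • u = m := by rw [hrep]; abel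
  have h1 : n • (x - k₁ • u) ∈ M := zsmul_mem_of_nonneg (by rw [hxm]; exact hm) hn.le
  have h2 : (k - n * k₁) • u ∈ M := by
    have h3 : (k - n * k₁) • u = (k • u - n • x) + n • (x - k₁ • u) := by
      rw [sub_smul, mul_smul, smul_sub]; abel
    rw [h3]; exact M.add_mem hmem h1
  have hk : n * k₁ ≤ k := by have := coef_nonneg hu hneg h2; omega
  rw [le_div_iff₀ (by exact_mod_cast hn)]
  calc ((k₁:ℝ) * n) = ((n * k₁ : ℤ) : ℝ) := by push_cast; ring
  _ ≤ k := by exact_mod_cast hk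

/-- The sublinear functional. -/
noncomputable def pfun (M : AddSubmonoid G) (u : G) (x : G) : ℝ := sInf (pSet M u x)

include horder

lemma pfun_le (hu : u ∈ M) (hneg : -u ∉ M) {x : G} {r : ℝ} (h : r ∈ pSet M u x) :
    pfun M u x ≤ r := by
  obtain ⟨c, hc⟩ := pSet_lower horder hu hneg x
  exact csInf_le ⟨c, hc⟩ h

lemma le_pfun {x : G} {c : ℝ} (h : ∀ r ∈ pSet M u x, c ≤ r) : c ≤ pfun M u x :=
  le_csInf (pSet_nonempty horder x) h

end GHAux

namespace GHAux

variable {G : Type*} [AddCommGroup G] {M : AddSubmonoid G} {u : G}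
variable (horder : ∀ g : G, ∃ (k : ℤ) (m : G), m ∈ M ∧ g = m + k • u)
variable (hu : u ∈ M) (hneg : -u ∉ M)

lemma pSet_add {x y : G} {r s : ℝ} (hr : r ∈ pSet M u x) (hs : s ∈ pSet M u y) :
    r + s ∈ pSet M u (x + y) := by
  obtain ⟨k, n, hn, rfl, hm⟩ := hr
  obtain ⟨k', n', hn', rfl, hm'⟩ := hs
  refine ⟨k * n' + k' * n, n * n', by positivity, ?_, ?_⟩
  · have h0 : (n : ℝ) ≠ 0 := by exact_mod_cast hn.ne'
    have h0' : (n' : ℝ) ≠ 0 := by exact_mod_cast hn'.ne'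
    push_cast; field_simp; try ring
  · have hid : (k * n' + k' * n) • u - (n * n') • (x + y)
        = n' • (k • u - n • x) + n • (k' • u - n' • y) := by module
    rw [hid]
    exact M.add_mem (zsmul_mem_of_nonneg hm hn'.le) (zsmul_mem_of_nonneg hm' hn.le)

lemma pSet_zsmul {x : G} {r : ℝ} (hr : r ∈ pSet M u x) {c : ℤ} (hc : 0 < c) :
    (c : ℝ) * r ∈ pSet M u (c • x) := by
  obtain ⟨k, n, hn, rfl, hm⟩ := hr
  refine ⟨c * k, n, hn, by push_cast; ring, ?_⟩
  have hid : (c * k) • u - n • (c • x) = c • (k • u - n • x) := by module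
  rw [hid]
  exact zsmul_mem_of_nonneg hm hc.le

include horder hu hneg

lemma pfun_add (x y : G) : pfun M u (x + y) ≤ pfun M u x + pfun M u y := by
  have key : ∀ r ∈ pSet M u x, ∀ s ∈ pSet M u y, pfun M u (x + y) ≤ r + s :=
    fun r hr s hs => pfun_le horder hu hneg (pSet_add hr hs)
  have h1 : ∀ r ∈ pSet M u x, pfun M u (x + y) - r ≤ pfun M u y := fun r hr =>
    le_pfun horder fun s hs => by have := key r hr s hs; linarith
  have h2 : pfun M u (x + y) - pfun M u y ≤ pfun M u x :=
    le_pfun horder fun r hr => by have := h1 r hr; linarith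
  linarith

lemma pfun_zsmul_le {c : ℤ} (hc : 0 < c) (x : G) :
    pfun M u (c • x) ≤ (c : ℝ) * pfun M u x := by
  have hc' : (0 : ℝ) < (c : ℝ) := by exact_mod_cast hc
  have h1 : pfun M u (c • x) / (c : ℝ) ≤ pfun M u x :=
    le_pfun horder fun r hr => by
      have := pfun_le horder hu hneg (pSet_zsmul hr hc)
      rw [div_le_iff₀ hc', mul_comm]; linarith
  calc pfun M u (c • x) = (c : ℝ) * (pfun M u (c • x) / (c : ℝ)) := by field_simp
  _ ≤ (c : ℝ) * pfun M u x := by nlinarith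

lemma le_pfun_zsmul_u (k : ℤ) : (k : ℝ) ≤ pfun M u (k • u) := by
  refine le_pfun horder ?_
  rintro r ⟨j, n, hn, rfl, hm⟩
  have hid : j • u - n • (k • u) = (j - n * k) • u := by module
  rw [hid] at hm
  have := coef_nonneg hu hneg hm
  rw [le_div_iff₀ (by exact_mod_cast hn)]
  calc ((k:ℝ) * n) = ((n * k : ℤ) : ℝ) := by push_cast; ring
  _ ≤ j := by exact_mod_cast (by omega : n * k ≤ j)

lemma pfun_le_of_mem (m : G) (hm : m ∈ M) : pfun M u (-m) ≤ 0 :=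
  pfun_le horder hu hneg ⟨0, 1, one_pos, by norm_num, by simpa using hm⟩

lemma pfun_zero : pfun M u (0 : G) = 0 := by
  have h1 : pfun M u (0 : G) ≤ 0 := by
    have := pfun_le_of_mem horder hu hneg (0 : G) M.zero_mem
    simpa using this
  have h2 : (0 : ℝ) ≤ pfun M u (0 : G) := by
    refine le_pfun horder ?_
    rintro r ⟨j, n, hn, rfl, hm⟩
    rw [smul_zero, sub_zero] at hm
    have := coef_nonneg hu hneg hm
    positivity
  linarith

lemma pfun_u_le : pfun M u u ≤ 1 :=
  pfun_le horder hu hneg ⟨1, 1, one_pos, by norm_num, by simpa using M.zero_mem⟩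

lemma pfun_neg_u_le : pfun M u (-u) ≤ -1 :=
  pfun_le horder hu hneg ⟨-1, 1, one_pos, by norm_num, by simpa using M.zero_mem⟩

end GHAux

namespace GHAux

variable {G : Type*} [AddCommGroup G] {M : AddSubmonoid G} {u : G}
variable (horder : ∀ g : G, ∃ (k : ℤ) (m : G), m ∈ M ∧ g = m + k • u)
variable (hu : u ∈ M) (hneg : -u ∉ M)

open Submodule

include horder hu hneg in
theorem step (f : G →ₗ.[ℤ] ℝ) (hf : ∀ x : f.domain, f x ≤ pfun M u (x : G))
    {y : G} (hy : y ∉ f.domain) :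
    ∃ g : G →ₗ.[ℤ] ℝ, f ≤ g ∧ y ∈ g.domain ∧ ∀ x : g.domain, g x ≤ pfun M u (x : G) := by
  set p : G → ℝ := pfun M u with hp
  -- the master inequality
  have master : ∀ (x x' : f.domain) (n m : ℤ), 0 < n → 0 < m →
      (f x' - p ((x' : G) - m • y)) / (m : ℝ) ≤ (p ((x : G) + n • y) - f x) / (n : ℝ) := by
    intro x x' n m hn hm
    have hn' : (0:ℝ) < (n:ℝ) := by exact_mod_cast hn
    have hm' : (0:ℝ) < (m:ℝ) := by exact_mod_cast hm
    have hsum : f (m • x + n • x') = (m : ℝ) * f x + (n : ℝ) * f x' := by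
      rw [f.map_add, f.map_smul, f.map_smul, zsmul_eq_mul, zsmul_eq_mul]
    have hcoe : ((m • x + n • x' : f.domain) : G) = m • (x : G) + n • (x' : G) := by
      push_cast; rfl
    have hid : m • (x : G) + n • (x' : G) = m • ((x : G) + n • y) + n • ((x' : G) - m • y) := by
      module
    have hb : f (m • x + n • x') ≤ (m:ℝ) * p ((x : G) + n • y) + (n:ℝ) * p ((x' : G) - m • y) := by
      calc f (m • x + n • x') ≤ p ((m • x + n • x' : f.domain) : G) := hf _
      _ = p (m • ((x : G) + n • y) + n • ((x' : G) - m • y)) := by rw [hcoe, hid]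
      _ ≤ p (m • ((x : G) + n • y)) + p (n • ((x' : G) - m • y)) :=
          pfun_add horder hu hneg _ _
      _ ≤ (m:ℝ) * p ((x : G) + n • y) + (n:ℝ) * p ((x' : G) - m • y) :=
          add_le_add (pfun_zsmul_le horder hu hneg hm _) (pfun_zsmul_le horder hu hneg hn _)
    rw [hsum] at hb
    rw [div_le_div_iff₀ hm' hn']
    nlinarith
  set A : Set ℝ := {r | ∃ (x : f.domain) (n : ℤ), 0 < n ∧ r = (p ((x : G) + n • y) - f x) / (n : ℝ)}
    with hA
  have hAne : A.Nonempty := ⟨_, 0, 1, one_pos, rfl⟩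
  have hAbdd : BddBelow A := by
    refine ⟨(f 0 - p (((0 : f.domain) : G) - (1 : ℤ) • y)) / ((1 : ℤ) : ℝ), ?_⟩
    rintro r ⟨x, n, hn, rfl⟩
    exact master x 0 n 1 hn one_pos
  set α := sInf A with hα
  have K1 : ∀ (x : f.domain) {n : ℤ}, 0 < n → f x + (n : ℝ) * α ≤ p ((x : G) + n • y) := by
    intro x n hn
    have hn' : (0:ℝ) < (n:ℝ) := by exact_mod_cast hn
    have h1 : α ≤ (p ((x : G) + n • y) - f x) / (n : ℝ) := csInf_le hAbdd ⟨x, n, hn, rfl⟩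
    rw [le_div_iff₀ hn'] at h1
    nlinarith
  have K2 : ∀ (x : f.domain) {m : ℤ}, 0 < m → f x - (m : ℝ) * α ≤ p ((x : G) - m • y) := by
    intro x m hm
    have hm' : (0:ℝ) < (m:ℝ) := by exact_mod_cast hm
    have h1 : (f x - p ((x : G) - m • y)) / (m : ℝ) ≤ α := by
      refine le_csInf hAne ?_
      rintro r ⟨x', n, hn, rfl⟩
      exact master x' x n m hn hm
    rw [div_le_iff₀ hm'] at h1
    nlinarith
  have p0 : p (0 : G) = 0 := pfun_zero horder hu hneg
  have compat : ∀ (k : ℤ) (hk : k • y ∈ f.domain), f ⟨k • y, hk⟩ = (k : ℝ) * α := by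
    have hcpos : ∀ (k : ℤ), 0 < k → ∀ (hk : k • y ∈ f.domain), f ⟨k • y, hk⟩ = (k : ℝ) * α := by
      intro k hk hmem
      set z : f.domain := ⟨k • y, hmem⟩ with hz
      have h1 : f (-z) + (k : ℝ) * α ≤ p (((-z : f.domain) : G) + k • y) := K1 (-z) hk
      have h2 : f z - (k : ℝ) * α ≤ p ((z : G) - k • y) := K2 z hk
      have e1 : ((-z : f.domain) : G) + k • y = 0 := by
        simp [hz]
      have e2 : (z : G) - k • y = 0 := by simp [hz]
      rw [e1, p0] at h1
      rw [e2, p0] at h2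
      rw [f.map_neg] at h1
      linarith
    intro k hk
    rcases lt_trichotomy k 0 with h | h | h
    · have hmem' : (-k) • y ∈ f.domain := by
        have : (-k) • y = -(k • y) := by rw [neg_smul]
        rw [this]; exact neg_mem hk
      have := hcpos (-k) (by omega) hmem'
      have hzeq : (⟨k • y, hk⟩ : f.domain) = -⟨(-k) • y, hmem'⟩ := by
        apply Subtype.ext; simp
      rw [hzeq, f.map_neg, this]
      push_cast; ring
    · subst h
      have hzeq : (⟨(0:ℤ) • y, hk⟩ : f.domain) = 0 := by apply Subtype.ext; simp
      rw [hzeq, f.map_zero]; norm_num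
    · exact hcpos k h hk
  -- the new domain
  set D : Submodule ℤ G := f.domain ⊔ span ℤ {y} with hD
  have hrep : ∀ z : D, ∃ (x : f.domain) (k : ℤ), (z : G) = (x : G) + k • y := by
    rintro ⟨z, hz⟩
    rcases mem_sup.1 hz with ⟨x, hx, w, hw, hxw⟩
    rcases mem_span_singleton.1 hw with ⟨k, hk⟩
    exact ⟨⟨x, hx⟩, k, show z = x + k • y by rw [← hxw, hk]⟩
  choose xr kr hxr using hrep
  have wd : ∀ (x₁ : f.domain) (k₁ : ℤ) (x₂ : f.domain) (k₂ : ℤ),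
      (x₁ : G) + k₁ • y = (x₂ : G) + k₂ • y →
      f x₁ + (k₁ : ℝ) * α = f x₂ + (k₂ : ℝ) * α := by
    intro x₁ k₁ x₂ k₂ heq
    have hd : (k₂ - k₁) • y = (x₁ : G) - (x₂ : G) := by
      have h2 : ((x₁ : G) + k₁ • y) - ((x₂ : G) + k₁ • y) = (x₁ : G) - (x₂ : G) := by abel
      rw [← h2, heq, sub_smul]; abel
    have hmem : (k₂ - k₁) • y ∈ f.domain := by
      rw [hd]; exact sub_mem x₁.2 x₂.2
    have hc := compat (k₂ - k₁) hmem
    have hsub : (⟨(k₂ - k₁) • y, hmem⟩ : f.domain) = x₁ - x₂ := by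
      apply Subtype.ext
      show (k₂ - k₁) • y = ((x₁ - x₂ : f.domain) : G)
      push_cast
      exact hd
    rw [hsub, f.map_sub] at hc
    push_cast at hc ⊢
    linarith
  set v : D → ℝ := fun z => f (xr z) + (kr z : ℝ) * α with hv
  have hvadd : ∀ z w : D, v (z + w) = v z + v w := by
    intro z w
    have hdec : ((z + w : D) : G) = ((xr z + xr w : f.domain) : G) + (kr z + kr w) • y := by
      push_cast [hxr z, hxr w]
      rw [add_smul]; abel
    have := wd (xr (z + w)) (kr (z + w)) (xr z + xr w) (kr z + kr w) (by rw [← hdec, ← hxr])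
    rw [hv]
    simp only []
    rw [this, f.map_add]
    push_cast; ring
  refine ⟨⟨D, (AddMonoidHom.mk' v hvadd).toIntLinearMap⟩, ⟨?_, ?_⟩, ?_, ?_⟩
  · exact le_sup_left
  · rintro x z (hxz : (x : G) = (z : G))
    show f x = v z
    have := wd x 0 (xr z) (kr z) (by rw [hxz, hxr z]; simp)
    simpa using this
  · exact mem_sup_right (mem_span_singleton_self y)
  · rintro z
    show v z ≤ p (z : G)
    rcases lt_trichotomy (kr z) 0 with h | h | h
    · have h2 := K2 (xr z) (show (0:ℤ) < -(kr z) by omega)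
      have e : ((xr z : G)) - (-(kr z)) • y = (z : G) := by rw [hxr z, neg_smul]; abel
      rw [e] at h2
      show (f (xr z) : ℝ) + ((kr z : ℤ) : ℝ) * α ≤ p (z : G)
      push_cast at h2 ⊢
      linarith
    · have e : (z : G) = (xr z : G) := by rw [hxr z, h]; simp
      show (f (xr z) : ℝ) + ((kr z : ℤ) : ℝ) * α ≤ p (z : G)
      rw [h, e]
      simpa using hf (xr z)
    · have h1 := K1 (xr z) h
      rw [← hxr z] at h1
      show (f (xr z) : ℝ) + ((kr z : ℤ) : ℝ) * α ≤ p (z : G)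
      linarith

end GHAux

namespace GHAux

variable {G : Type*} [AddCommGroup G] {M : AddSubmonoid G} {u : G}
variable (horder : ∀ g : G, ∃ (k : ℤ) (m : G), m ∈ M ∧ g = m + k • u)
variable (hu : u ∈ M) (hneg : -u ∉ M)

open Submodule

include horder hu hneg in
theorem exists_state : ∃ φ : G →+ ℝ, (∀ m ∈ M, 0 ≤ φ m) ∧ φ u = 1 := by
  classical
  set S := {f : G →ₗ.[ℤ] ℝ | ∀ x : f.domain, f x ≤ pfun M u (x : G)} with hSdef
  have hbot : (⊥ : G →ₗ.[ℤ] ℝ) ∈ S := by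
    rintro x
    have hx : x = 0 := Subtype.eq ((mem_bot ℤ).1 x.2)
    have hcoe : (x : G) = 0 := by rw [hx]; rfl
    rw [hx, LinearPMap.map_zero, ZeroMemClass.coe_zero, pfun_zero horder hu hneg]
  have hSc : ∀ c ⊆ S, IsChain (· ≤ ·) c → ∀ y ∈ c, ∃ ub ∈ S, ∀ z ∈ c, z ≤ ub := by
    intro c hcs c_chain y hy
    have cne : c.Nonempty := ⟨y, hy⟩
    have hcd : DirectedOn (· ≤ ·) c := c_chain.directedOn
    refine ⟨LinearPMap.sSup c hcd, ?_, fun _ hz => LinearPMap.le_sSup hcd hz⟩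
    rintro ⟨x, hx⟩
    have hdir : DirectedOn (· ≤ ·) (LinearPMap.domain '' c) :=
      directedOn_image.2 (hcd.mono LinearPMap.domain_mono.monotone)
    rcases (mem_sSup_of_directed (cne.image _) hdir).1 hx with ⟨_, ⟨f, hfc, rfl⟩, hfx⟩
    have hle : f ≤ LinearPMap.sSup c hcd := LinearPMap.le_sSup _ hfc
    have heq : f ⟨x, hfx⟩ = LinearPMap.sSup c hcd ⟨x, hx⟩ := hle.2 rfl
    rw [← heq]
    exact hcs hfc ⟨x, hfx⟩
  obtain ⟨q, -, hqS, hqmax⟩ := zorn_le_nonempty₀ S hSc ⊥ hbot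
  -- q has full domain
  have hdom : q.domain = ⊤ := by
    by_contra hne
    obtain ⟨y, -, hy⟩ : ∃ y ∈ (⊤ : Submodule ℤ G), y ∉ q.domain :=
      SetLike.exists_of_lt (lt_top_iff_ne_top.2 hne)
    obtain ⟨g, hqg, hyg, hgS⟩ := step horder hu hneg q hqS hy
    have : g ≤ q := hqmax hgS hqg
    exact hy (this.1 hyg)
  -- turn q into a total additive map
  have hmem : ∀ x : G, x ∈ q.domain := fun x => hdom ▸ mem_top
  set φ₀ : G → ℝ := fun x => q ⟨x, hmem x⟩ with hφ₀
  have hadd : ∀ x y : G, φ₀ (x + y) = φ₀ x + φ₀ y := by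
    intro x y
    have : (⟨x + y, hmem _⟩ : q.domain) = ⟨x, hmem x⟩ + ⟨y, hmem y⟩ := rfl
    rw [hφ₀]; simp only []
    rw [this, q.map_add]
  have hbound : ∀ x : G, φ₀ x ≤ pfun M u x := fun x => hqS ⟨x, hmem x⟩
  refine ⟨AddMonoidHom.mk' φ₀ hadd, ?_, ?_⟩
  · intro m hm
    have h1 : φ₀ (-m) ≤ pfun M u (-m) := hbound (-m)
    have h2 : pfun M u (-m) ≤ 0 := pfun_le_of_mem horder hu hneg m hm
    have h3 : φ₀ (-m) = -φ₀ m := by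
      have : (⟨-m, hmem _⟩ : q.domain) = -⟨m, hmem m⟩ := rfl
      rw [hφ₀]; simp only []
      rw [this, q.map_neg]
    show 0 ≤ φ₀ m
    rw [h3] at h1
    linarith
  · show φ₀ u = 1
    have h1 : φ₀ u ≤ pfun M u u := hbound u
    have h2 : φ₀ (-u) ≤ pfun M u (-u) := hbound (-u)
    have h3 : φ₀ (-u) = -φ₀ u := by
      have : (⟨-u, hmem _⟩ : q.domain) = -⟨u, hmem u⟩ := rfl
      rw [hφ₀]; simp only []
      rw [this, q.map_neg]
    have h4 := pfun_u_le horder hu hneg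
    have h5 := pfun_neg_u_le horder hu hneg
    rw [h3] at h2
    linarith

end GHAux

namespace GHAux

open Set

variable {G : Type*} [AddCommGroup G]

theorem pos_of_pure_pos (M : AddSubmonoid G) (u : G)
    (horder : ∀ g : G, ∃ (k : ℤ) (m : G), m ∈ M ∧ g = m + k • u) (g : G)
    (hpos : ∀ φ : G →+ ℝ, IsPureState M u φ → 0 < φ g)
    (ψ : G →+ ℝ) (hψ : IsState M u ψ) : 0 < ψ g := by
  classical
  set S : Set (G → ℝ) :=
    {f | (∀ x y : G, f (x + y) = f x + f y) ∧ (∀ m ∈ M, 0 ≤ f m) ∧ f u = 1} with hS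
  have hψS : ⇑ψ ∈ S := ⟨fun x y => ψ.map_add x y, hψ.1, hψ.2⟩
  have hclosed : IsClosed S := by
    have hSeq : S = (⋂ (x : G) (y : G), {f : G → ℝ | f (x + y) = f x + f y}) ∩
          ((⋂ m ∈ M, {f : G → ℝ | 0 ≤ f m}) ∩ {f : G → ℝ | f u = 1}) := by
      ext f
      simp only [hS, mem_setOf_eq, mem_inter_iff, mem_iInter]
    rw [hSeq]
    refine IsClosed.inter ?_ (IsClosed.inter ?_ ?_)
    · exact isClosed_iInter fun x => isClosed_iInter fun y =>
        isClosed_eq (continuous_apply (x + y)) ((continuous_apply x).add (continuous_apply y))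
    · exact isClosed_iInter fun m => isClosed_iInter fun _ =>
        isClosed_le continuous_const (continuous_apply m)
    · exact isClosed_eq (continuous_apply u) continuous_const
  choose kk mm hmm hrep using horder
  have hSbound : ∀ f ∈ S, ∀ x : G, f x ∈ Icc ((kk x : ℝ)) (-(kk (-x) : ℝ)) := by
    intro f hf x
    obtain ⟨hfadd, hfM, hfu⟩ := hf
    set φf : G →+ ℝ := AddMonoidHom.mk' f hfadd with hφf
    have hzs : ∀ (k : ℤ), f (k • u) = k := by
      intro k
      have h1 : φf (k • u) = k • φf u := map_zsmul φf k u
      have h2 : φf u = 1 := hfu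
      have h3 : φf (k • u) = f (k • u) := rfl
      rw [h2] at h1
      rw [← h3, h1, zsmul_eq_mul, mul_one]
    have hval : ∀ z : G, (kk z : ℝ) ≤ f z := by
      intro z
      have h1 : f z = f (mm z) + kk z := by
        conv_lhs => rw [hrep z]
        rw [hfadd, hzs]
      have := hfM _ (hmm z)
      linarith
    constructor
    · exact hval x
    · have h2 := hval (-x)
      have h3 : f (-x) = -f x := by
        have h4 : φf (-x) = -φf x := map_neg φf x
        exact h4
      linarith
  have hsub : S ⊆ Set.univ.pi (fun x : G => Icc ((kk x : ℝ)) (-(kk (-x) : ℝ))) := by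
    intro f hf x _
    exact hSbound f hf x
  have hKcomp : IsCompact (Set.univ.pi fun x : G => Icc ((kk x : ℝ)) (-(kk (-x) : ℝ))) :=
    isCompact_univ_pi fun x => isCompact_Icc
  have hScomp : IsCompact S := hKcomp.of_isClosed_subset hclosed hsub
  have hcont : Continuous (fun f : G → ℝ => f g) := continuous_apply g
  obtain ⟨f₀, hf₀S, hf₀min⟩ := hScomp.exists_isMinOn ⟨⇑ψ, hψS⟩ hcont.continuousOn
  set l : (G → ℝ) →L[ℝ] ℝ := -(ContinuousLinearMap.proj (R := ℝ) (φ := fun _ : G => ℝ) g)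
    with hl
  have hlval : ∀ f : G → ℝ, l f = -(f g) := fun f => rfl
  set F : Set (G → ℝ) := {x ∈ S | ∀ y ∈ S, l y ≤ l x} with hF
  have hexp : IsExposed ℝ S F := fun _ => ⟨l, rfl⟩
  have hf₀F : f₀ ∈ F := by
    refine ⟨hf₀S, fun y hy => ?_⟩
    rw [hlval, hlval]
    have := hf₀min hy
    simpa using this
  have hFcomp : IsCompact F := hexp.isCompact hScomp
  obtain ⟨e, heF⟩ := hFcomp.extremePoints_nonempty ⟨f₀, hf₀F⟩
  have heS : e ∈ S.extremePoints ℝ := (hexp.isExtreme).extremePoints_subset_extremePoints heF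
  have heFmem : e ∈ F := extremePoints_subset heF
  obtain ⟨headd, heM, heu⟩ := heS.1
  set φe : G →+ ℝ := AddMonoidHom.mk' e headd with hφe
  have hpure : IsPureState M u φe := by
    refine ⟨⟨heM, heu⟩, ?_⟩
    intro φ₁ φ₂ h₁ h₂ hsum
    have h₁S : ⇑φ₁ ∈ S := ⟨fun x y => φ₁.map_add x y, h₁.1, h₁.2⟩
    have h₂S : ⇑φ₂ ∈ S := ⟨fun x y => φ₂.map_add x y, h₂.1, h₂.2⟩
    have hseg : e ∈ openSegment ℝ ⇑φ₁ ⇑φ₂ := by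
      refine ⟨1/2, 1/2, by norm_num, by norm_num, by norm_num, ?_⟩
      funext x
      have h5 : φe x + φe x = φ₁ x + φ₂ x := by
        have := congrArg (fun ρ : G →+ ℝ => ρ x) hsum
        simpa using this
      have h6 : φe x = e x := rfl
      simp only [Pi.add_apply, Pi.smul_apply, smul_eq_mul]
      rw [h6] at h5
      linarith
    obtain ⟨hh₁, hh₂⟩ := (mem_extremePoints.1 heS).2 _ h₁S _ h₂S hseg
    constructor
    · ext x
      exact congrFun hh₁ x
    · ext x
      exact congrFun hh₂ x
  have hegpos : 0 < e g := hpos φe hpure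
  have hle : e g ≤ ψ g := by
    have := heFmem.2 ⇑ψ hψS
    rw [hlval, hlval] at this
    linarith
  linarith

end GHAux

/-- Goodearl–Handelman criterion. -/
theorem goodearl_handelman {G : Type*} [AddCommGroup G] (M : AddSubmonoid G) (u : G)
    (hu : u ∈ M)
    (horder : ∀ g : G, ∃ (k : ℤ) (m : G), m ∈ M ∧ g = m + k • u)
    (g : G) (hpos : ∀ φ : G →+ ℝ, IsPureState M u φ → 0 < φ g) :
    ∃ k : ℕ, 0 < k ∧ k • g ∈ M := by
  by_cases hMu : -u ∈ M
  · refine ⟨1, one_pos, ?_⟩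
    rw [one_nsmul]
    obtain ⟨k, m, hm, rfl⟩ := horder g
    refine M.add_mem hm ?_
    rcases le_or_gt 0 k with h | h
    · exact GHAux.zsmul_mem_of_nonneg hu h
    · have he : k • u = (-k) • (-u) := by rw [smul_neg, neg_smul, neg_neg]
      rw [he]
      exact GHAux.zsmul_mem_of_nonneg hMu (by omega)
  · by_contra hcon
    push_neg at hcon
    set M' : AddSubmonoid G := M ⊔ AddSubmonoid.closure {-g} with hM'
    have hle : M ≤ M' := le_sup_left
    have hu' : u ∈ M' := hle hu
    have horder' : ∀ x : G, ∃ (k : ℤ) (m : G), m ∈ M' ∧ x = m + k • u := by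
      intro x
      obtain ⟨k, m, hm, hx⟩ := horder x
      exact ⟨k, m, hle hm, hx⟩
    have hneg' : -u ∉ M' := by
      intro hmem
      rcases AddSubmonoid.mem_sup.1 hmem with ⟨m, hm, w, hw, hmw⟩
      rcases AddSubmonoid.mem_closure_singleton.1 hw with ⟨n, hn⟩
      rcases Nat.eq_zero_or_pos n with h0 | hnpos
      · have hmu : m = -u := by rw [← hmw, ← hn, h0, zero_nsmul, add_zero]
        exact hMu (hmu ▸ hm)
      · have h2 : m + n • (-g) = -u := by rw [hn]; exact hmw
        have h3 : m - n • g = -u := by rwa [smul_neg, ← sub_eq_add_neg] at h2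
        have h5 : m = -u + n • g := sub_eq_iff_eq_add.1 h3
        have hgu : n • g = m + u := by rw [h5]; abel
        exact hcon n hnpos (hgu ▸ M.add_mem hm hu)
    obtain ⟨φ, hφM', hφu⟩ := GHAux.exists_state horder' hu' hneg'
    have hφstate : IsState M u φ := ⟨fun m hm => hφM' m (hle hm), hφu⟩
    have hgle : φ g ≤ 0 := by
      have h1 : 0 ≤ φ (-g) :=
        hφM' (-g) ((le_sup_right : AddSubmonoid.closure {-g} ≤ M')
          (AddSubmonoid.subset_closure (Set.mem_singleton _)))
      rw [map_neg] at h1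
      linarith
    have hgpos := GHAux.pos_of_pure_pos M u horder g hpos φ hφstate
    linarith
end

section
/- Let A be a commutative ring, S ⊆ A an archimedean subsemiring (S + ℤ·1 = A), G an A-module, M ⊆ G a submonoid closed under the S-action (S·M ⊆ M), and u ∈ M an order unit of (G, M). Then every pure state φ of (G, M, u) satisfies the multiplicative law φ(a·g) = φ(a·u)·φ(g) for all a ∈ A and g ∈ G. -/
/-!
A pure state `φ` admits no additive `ψ` with `0 ≤ ψ ≤ c φ` on `M` other than the multiples of `φ`:
after scaling `ψ` so that `c = 1` and writing `t = ψ u`, the states `(1 - t) φ + ψ` and `(1 + t) φ - ψ` average to `φ`. For `s ∈ S` the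
archimedean property gives an integer `k` with `k - s ∈ S`, so `g ↦ φ (s • g)` is such a `ψ` with
`c = k`; this is the multiplicative law for `s ∈ S`, and every `a ∈ A` differs from an element of
`S` by an integer.
-/

section PureState

variable {G : Type*} [AddCommGroup G] {M : AddSubmonoid G} {u : G} {φ : G →+ ℝ}

theorem IsPureState.apply_eq_of_le_self (hφ : IsPureState M u φ) (hu : u ∈ M) {ψ : G →+ ℝ}
    (hψ : ∀ m ∈ M, 0 ≤ ψ m) (hψφ : ∀ m ∈ M, ψ m ≤ φ m) (g : G) :
    ψ g = ψ u * φ g := by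
  obtain ⟨⟨hφM, hφu⟩, hextreme⟩ := hφ
  set t := ψ u
  have ht0 : 0 ≤ t := hψ u hu
  have ht1 : t ≤ 1 := hφu ▸ hψφ u hu
  have hstate₁ : IsState M u ((1 - t) • φ + ψ) := by
    refine ⟨fun m hm => ?_, ?_⟩
    · simp only [AddMonoidHom.add_apply, AddMonoidHom.smul_apply, smul_eq_mul]
      nlinarith [hφM m hm, hψ m hm]
    · simp only [AddMonoidHom.add_apply, AddMonoidHom.smul_apply, smul_eq_mul, hφu]
      ring
  have hstate₂ : IsState M u ((1 + t) • φ - ψ) := by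
    refine ⟨fun m hm => ?_, ?_⟩
    · simp only [AddMonoidHom.sub_apply, AddMonoidHom.smul_apply, smul_eq_mul]
      nlinarith [hφM m hm, hψφ m hm]
    · simp only [AddMonoidHom.sub_apply, AddMonoidHom.smul_apply, smul_eq_mul, hφu]
      ring
  have hmid : φ + φ = (1 - t) • φ + ψ + ((1 + t) • φ - ψ) := by
    ext x
    simp only [AddMonoidHom.add_apply, AddMonoidHom.sub_apply, AddMonoidHom.smul_apply,
      smul_eq_mul]
    ring
  have hg := DFunLike.congr_fun (hextreme _ _ hstate₁ hstate₂ hmid).1 g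
  simp only [AddMonoidHom.add_apply, AddMonoidHom.smul_apply, smul_eq_mul] at hg
  linarith

theorem IsPureState.apply_eq_of_le_mul (hφ : IsPureState M u φ) (hu : u ∈ M) {ψ : G →+ ℝ}
    (c : ℝ) (hψ : ∀ m ∈ M, 0 ≤ ψ m) (hψφ : ∀ m ∈ M, ψ m ≤ c * φ m) (g : G) :
    ψ g = ψ u * φ g := by
  have hc : 0 < 1 + c := by
    have hψu := hψφ u hu
    rw [hφ.1.2, mul_one] at hψu
    linarith [hψ u hu]
  have hscaled := hφ.apply_eq_of_le_self hu (ψ := (1 + c)⁻¹ • ψ)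
    (fun m hm => by simpa using mul_nonneg (inv_nonneg.2 hc.le) (hψ m hm))
    (fun m hm => by
      rw [AddMonoidHom.smul_apply, smul_eq_mul, inv_mul_le_iff₀ hc]
      nlinarith [hψφ m hm, hφ.1.1 m hm]) g
  simp only [AddMonoidHom.smul_apply, smul_eq_mul, mul_assoc] at hscaled
  exact mul_left_cancel₀ (inv_ne_zero hc.ne') hscaled

end PureState

theorem AddMonoidHom.map_intCast_smul {A G : Type*} [Ring A] [AddCommGroup G] [Module A G]
    (φ : G →+ ℝ) (k : ℤ) (g : G) : φ ((k : A) • g) = k * φ g := by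
  rw [Int.cast_smul_eq_zsmul, map_zsmul, zsmul_eq_mul]

theorem IsPureState.map_smul_of_mem {A G : Type*} [CommRing A] [AddCommGroup G] [Module A G]
    {S : Subsemiring A} {M : AddSubmonoid G} (hSM : ∀ s ∈ S, ∀ m ∈ M, s • m ∈ M)
    {u : G} (hu : u ∈ M) {φ : G →+ ℝ} (hφ : IsPureState M u φ)
    {s : A} (hs : s ∈ S) {k : ℤ} (hks : (k : A) - s ∈ S) (g : G) :
    φ (s • g) = φ (s • u) * φ g :=
  hφ.apply_eq_of_le_mul hu (ψ := φ.comp (DistribSMul.toAddMonoidHom G s)) k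
    (fun m hm => hφ.1.1 _ (hSM s hs m hm))
    (fun m hm => by
      have := hφ.1.1 _ (hSM _ hks m hm)
      rw [sub_smul, map_sub, φ.map_intCast_smul] at this
      simpa using this) g

theorem multiplicative_law_general {A : Type*} [CommRing A] {G : Type*} [AddCommGroup G] [Module A G]
    (S : Subsemiring A) (harch : ∀ a : A, ∃ k : ℤ, (k : A) + a ∈ S)
    (M : AddSubmonoid G) (hSM : ∀ s ∈ S, ∀ m ∈ M, s • m ∈ M)
    (u : G) (hu : u ∈ M)
    (φ : G →+ ℝ) (hφ : IsPureState M u φ) :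
    ∀ (a : A) (g : G), φ (a • g) = φ (a • u) * φ g := by
  intro a g
  obtain ⟨k, hs⟩ := harch a
  obtain ⟨l, hls⟩ := harch (-((k : A) + a))
  have hS := hφ.map_smul_of_mem hSM hu hs (k := l) (by rwa [← sub_eq_add_neg] at hls)
  have hshift : ∀ x : G, a • x = ((k : A) + a) • x - (k : A) • x := fun x => by
    rw [add_smul, add_sub_cancel_left]
  rw [hshift, hshift u, map_sub, map_sub, hS, φ.map_intCast_smul, φ.map_intCast_smul, hφ.1.2]
  ring

/-- Multiplicative law for pure states. -/
theorem multiplicative_law {A : Type*} [CommRing A] {G : Type*} [AddCommGroup G] [Module A G]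
    (S : Subsemiring A) (harch : ∀ a : A, ∃ k : ℤ, (k : A) + a ∈ S)
    (M : AddSubmonoid G) (hSM : ∀ s ∈ S, ∀ m ∈ M, s • m ∈ M)
    (u : G) (hu : u ∈ M)
    (horder : ∀ g : G, ∃ (k : ℤ) (m : G), m ∈ M ∧ g = m + k • u)
    (φ : G →+ ℝ) (hφ : IsPureState M u φ) :
    ∀ (a : A) (g : G), φ (a • g) = φ (a • u) * φ g :=
  multiplicative_law_general S harch M hSM u hu φ hφ
end

section
/- Under the hypotheses of the Multiplicative Law (A a commutative ring, S ⊆ A an archimedean subsemiring, G an A-module, M an S-subsemimodule of G, u ∈ M an order unit), for each pure state φ of (G, M, u) the map a ↦ φ(a·u) : A → ℝ is a ring homomorphism. -/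
/-!
For `s, t` with `s + t = k ∈ ℤ` and `s • M, t • M ⊆ M`, the functional `φ` is the average
`φ = (λ/k) ψ_s + (μ/k) ψ_t` of the states `ψ_s = φ (s • ·) / λ`, `ψ_t = φ (t • ·) / μ`, where
`λ = φ (s • u)` and `μ = φ (t • u)`. Purity forces `ψ_s = φ`, i.e. `φ (s • g) = φ (s • u) φ g`
(when `λ = 0`, positivity and the order unit give `φ (s • ·) = 0` instead). Archimedeanity provides
such a decomposition for every element of `A`, and `a ↦ φ (a • u)` is then multiplicative.
-/

section States

variable {G : Type*} [AddCommGroup G] {M : AddSubmonoid G} {u : G}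

theorem IsState.smul_add_one_sub_smul {ψ₁ ψ₂ : G →+ ℝ} (h₁ : IsState M u ψ₁)
    (h₂ : IsState M u ψ₂) {c : ℝ} (hc₀ : 0 ≤ c) (hc₁ : c ≤ 1) :
    IsState M u (c • ψ₁ + (1 - c) • ψ₂) := by
  refine ⟨fun m hm => ?_, by simp [h₁.2, h₂.2]⟩
  have := h₁.1 m hm
  have := h₂.1 m hm
  have : 0 ≤ 1 - c := by linarith
  simp only [AddMonoidHom.add_apply, AddMonoidHom.smul_apply, smul_eq_mul]
  positivity

theorem eq_zero_of_nonneg_of_map_eq_zero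
    (horder : ∀ g : G, ∃ (k : ℤ) (m : G), m ∈ M ∧ g = m + k • u)
    {ψ : G →+ ℝ} (hψ : ∀ m ∈ M, 0 ≤ ψ m) (hψu : ψ u = 0) : ψ = 0 := by
  have hnonneg (g : G) : 0 ≤ ψ g := by
    obtain ⟨k, m, hm, rfl⟩ := horder g
    simpa [hψu] using hψ m hm
  refine AddMonoidHom.ext fun g => le_antisymm ?_ (hnonneg g)
  rw [AddMonoidHom.zero_apply]
  linarith [hnonneg (-g), map_neg ψ g]

namespace IsPureState

variable {φ ψ₁ ψ₂ : G →+ ℝ} {c : ℝ}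

theorem eq_right_of_eq_smul_add_one_sub_smul (hφ : IsPureState M u φ) (h₁ : IsState M u ψ₁)
    (h₂ : IsState M u ψ₂) (hc₀ : 0 ≤ c) (hc : 2 * c ≤ 1)
    (h : φ = c • ψ₁ + (1 - c) • ψ₂) : ψ₂ = φ :=
  (hφ.2 _ _ (h₁.smul_add_one_sub_smul h₂ (by positivity) hc) h₂ (by rw [h]; module)).2

theorem eq_left_of_eq_smul_add_one_sub_smul (hφ : IsPureState M u φ) (h₁ : IsState M u ψ₁)
    (h₂ : IsState M u ψ₂) (hc₀ : 0 < c) (hc₁ : c < 1)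
    (h : φ = c • ψ₁ + (1 - c) • ψ₂) : ψ₁ = φ := by
  rcases le_or_gt (2 * c) 1 with hc | hc
  · have hψ₂ := hφ.eq_right_of_eq_smul_add_one_sub_smul h₁ h₂ hc₀.le hc h
    rw [hψ₂] at h
    have hcψ : c • ψ₁ = c • φ := by linear_combination (norm := module) -h
    exact smul_right_injective _ hc₀.ne' hcψ
  · exact hφ.eq_right_of_eq_smul_add_one_sub_smul (c := 1 - c) h₂ h₁ (by linarith)
      (by linarith) (by rw [h]; module)

end IsPureState

end States

section SmulState

variable {A : Type*} [CommRing A] {G : Type*} [AddCommGroup G] [Module A G]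
  {M : AddSubmonoid G} {u : G} {φ : G →+ ℝ}

theorem map_smul_add_map_smul (φ : G →+ ℝ) {s t : A} {k : ℤ} (hst : s + t = k) (g : G) :
    φ (s • g) + φ (t • g) = k * φ g := by
  rw [← map_add φ, ← add_smul, hst, map_intCast_smul φ A ℝ, smul_eq_mul]

/-- The state `ψ_a` of the header (junk `0` when `φ (a • u) = 0`). -/
noncomputable def smulState (φ : G →+ ℝ) (u : G) (a : A) : G →+ ℝ :=
  (φ (a • u))⁻¹ • φ.comp (DistribSMul.toAddMonoidHom G a)

theorem smulState_apply (a : A) (g : G) : smulState φ u a g = (φ (a • u))⁻¹ * φ (a • g) := rfl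

namespace IsState

theorem smulState {a : A} (hφ : IsState M u φ) (ha : ∀ m ∈ M, a • m ∈ M)
    (hpos : 0 < φ (a • u)) : IsState M u (smulState φ u a) :=
  ⟨fun m hm => by rw [smulState_apply]; exact mul_nonneg (inv_pos.2 hpos).le (hφ.1 _ (ha m hm)),
    by rw [smulState_apply, inv_mul_cancel₀ hpos.ne']⟩

theorem map_smul_eq_zero (horder : ∀ g : G, ∃ (k : ℤ) (m : G), m ∈ M ∧ g = m + k • u)
    (hφ : IsState M u φ) {a : A} (ha : ∀ m ∈ M, a • m ∈ M) (h₀ : φ (a • u) = 0) (g : G) :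
    φ (a • g) = 0 :=
  DFunLike.congr_fun (eq_zero_of_nonneg_of_map_eq_zero horder
    (ψ := φ.comp (DistribSMul.toAddMonoidHom G a)) (fun m hm => hφ.1 _ (ha m hm)) h₀) g

end IsState

namespace IsPureState

theorem smulState_eq_of_pos (hφ : IsPureState M u φ) {s t : A} {k : ℤ} (hst : s + t = k)
    (hs : ∀ m ∈ M, s • m ∈ M) (ht : ∀ m ∈ M, t • m ∈ M)
    (hs₀ : 0 < φ (s • u)) (ht₀ : 0 < φ (t • u)) : smulState φ u s = φ := by
  have hk : φ (s • u) + φ (t • u) = k := by rw [map_smul_add_map_smul φ hst, hφ.1.2, mul_one]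
  have hk₀ : (0 : ℝ) < k := hk ▸ add_pos hs₀ ht₀
  refine hφ.eq_left_of_eq_smul_add_one_sub_smul (hφ.1.smulState hs hs₀) (hφ.1.smulState ht ht₀)
    (c := φ (s • u) / k) (by positivity) ((div_lt_one hk₀).2 (by linarith)) ?_
  ext g
  have hg := map_smul_add_map_smul φ hst g
  simp only [AddMonoidHom.add_apply, AddMonoidHom.smul_apply, smulState_apply, smul_eq_mul]
  field_simp
  linear_combination -φ (t • u) * hg + φ (t • g) * hk

theorem map_smul_eq_mul_of_add_eq_intCast (hu : u ∈ M)
    (horder : ∀ g : G, ∃ (k : ℤ) (m : G), m ∈ M ∧ g = m + k • u)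
    (hφ : IsPureState M u φ) {s t : A} {k : ℤ} (hst : s + t = k)
    (hs : ∀ m ∈ M, s • m ∈ M) (ht : ∀ m ∈ M, t • m ∈ M) (g : G) :
    φ (s • g) = φ (s • u) * φ g := by
  have hk := map_smul_add_map_smul φ hst u
  rw [hφ.1.2, mul_one] at hk
  rcases (hφ.1.1 _ (hs u hu)).eq_or_lt with hs₀ | hs₀
  · rw [← hs₀, zero_mul, hφ.1.map_smul_eq_zero horder hs hs₀.symm]
  rcases (hφ.1.1 _ (ht u hu)).eq_or_lt with ht₀ | ht₀
  · have hg := map_smul_add_map_smul φ hst g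
    rw [hφ.1.map_smul_eq_zero horder ht ht₀.symm, add_zero] at hg
    rw [hg, ← hk, ← ht₀, add_zero]
  · have hg := DFunLike.congr_fun (hφ.smulState_eq_of_pos hst hs ht hs₀ ht₀) g
    rw [smulState_apply, inv_mul_eq_iff_eq_mul₀ hs₀.ne'] at hg
    exact hg

theorem map_smul_eq_mul (hu : u ∈ M)
    (horder : ∀ g : G, ∃ (k : ℤ) (m : G), m ∈ M ∧ g = m + k • u)
    (harch : ∀ a : A, ∃ k : ℤ, ∀ m ∈ M, ((k : A) + a) • m ∈ M)
    (hφ : IsPureState M u φ) (a : A) (g : G) : φ (a • g) = φ (a • u) * φ g := by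
  obtain ⟨k, hk⟩ := harch a
  obtain ⟨l, hl⟩ := harch (-(k + a))
  have h := hφ.map_smul_eq_mul_of_add_eq_intCast hu horder (k := l) (by ring) hk hl g
  simp only [add_smul, map_add, map_intCast_smul φ A ℝ, smul_eq_mul, hφ.1.2] at h
  linear_combination h

end IsPureState

end SmulState

/-- For a pure state `φ`, the map `a ↦ φ (a • u)` is a ring homomorphism `A → ℝ`. -/
theorem pure_state_gives_ring_hom {A : Type*} [CommRing A] {G : Type*} [AddCommGroup G]
    [Module A G]
    (S : Subsemiring A) (harch : ∀ a : A, ∃ k : ℤ, (k : A) + a ∈ S)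
    (M : AddSubmonoid G) (hSM : ∀ s ∈ S, ∀ m ∈ M, s • m ∈ M)
    (u : G) (hu : u ∈ M)
    (horder : ∀ g : G, ∃ (k : ℤ) (m : G), m ∈ M ∧ g = m + k • u)
    (φ : G →+ ℝ) (hφ : IsPureState M u φ) :
    ∃ χ : A →+* ℝ, ∀ a : A, χ a = φ (a • u) := by
  have hmul := hφ.map_smul_eq_mul hu horder fun a => (harch a).imp fun _ hk => hSM _ hk
  exact ⟨{ toFun := fun a => φ (a • u)
           map_one' := by rw [one_smul, hφ.1.2]
           map_mul' := fun a b => by rw [mul_smul, hmul]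
           map_zero' := by rw [zero_smul, map_zero]
           map_add' := fun a b => by rw [add_smul, map_add] }, fun _ => rfl⟩
end

section
/- Let φ be a state of (G, M, u) where G is an A-module, M an S-subsemimodule for an archimedean subsemiring S ⊆ A, and u an order unit. If s ∈ S satisfies φ(s·u) > 0, then the map φ_s : G → ℝ defined by φ_s(g) = φ(s·g)/φ(s·u) is again a state of (G, M, u). -/
/-- If `φ` is a state and `s ∈ S` satisfies `φ (s • u) > 0`, then
`g ↦ φ (s • g) / φ (s • u)` is again a state of `(G, M, u)`. -/
theorem scaled_state_is_state {A : Type*} [CommRing A] {G : Type*} [AddCommGroup G] [Module A G]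
    (S : Subsemiring A) (harch : ∀ a : A, ∃ k : ℤ, (k : A) + a ∈ S)
    (M : AddSubmonoid G) (hSM : ∀ s ∈ S, ∀ m ∈ M, s • m ∈ M)
    (u : G) (hu : u ∈ M)
    (horder : ∀ g : G, ∃ (k : ℤ) (m : G), m ∈ M ∧ g = m + k • u)
    (φ : G →+ ℝ) (hφ : IsState M u φ)
    (s : A) (hs : s ∈ S) (hpos : 0 < φ (s • u)) :
    ∃ ψ : G →+ ℝ, (∀ g : G, ψ g = φ (s • g) / φ (s • u)) ∧ IsState M u ψ := by
  refine ⟨AddMonoidHom.mk' (fun g => φ (s • g) / φ (s • u)) ?_, fun g => rfl, ?_, ?_⟩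
  · intro a b
    simp [smul_add, add_div]
  · intro m hm
    exact div_nonneg (hφ.1 _ (hSM s hs m hm)) hpos.le
  · exact div_self hpos.ne'
end

section
/- If φ is a pure state of (G, M, u) (with G an A-module, M an S-subsemimodule for archimedean S ⊆ A, u an order unit), and if a ∈ S and g ∈ M satisfy φ(a·u) = 0, then φ(a·g) = 0. -/
/-- If a pure state vanishes on `a • u` (for `a ∈ S`), it vanishes on `a • g` for all
`g ∈ M`. -/
theorem pure_state_vanishing {A : Type*} [CommRing A] {G : Type*} [AddCommGroup G] [Module A G]
    (S : Subsemiring A) (harch : ∀ a : A, ∃ k : ℤ, (k : A) + a ∈ S)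
    (M : AddSubmonoid G) (hSM : ∀ s ∈ S, ∀ m ∈ M, s • m ∈ M)
    (u : G) (hu : u ∈ M)
    (horder : ∀ g : G, ∃ (k : ℤ) (m : G), m ∈ M ∧ g = m + k • u)
    (φ : G →+ ℝ) (hφ : IsPureState M u φ)
    (a : A) (ha : a ∈ S) (g : G) (hg : g ∈ M) (hzero : φ (a • u) = 0) :
    φ (a • g) = 0 := by
  obtain ⟨⟨hpos, -⟩, -⟩ := hφ
  obtain ⟨k, m, hm, hmg⟩ := horder (-g)
  have hm' : m = (-k) • u - g := by
    have := hmg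
    rw [neg_zsmul]
    linear_combination (norm := abel) -this
  have h1 : a • ((-k) • u - g) ∈ M := hSM a ha _ (hm' ▸ hm)
  have h2 : (0:ℝ) ≤ φ (a • ((-k) • u - g)) := hpos _ h1
  have h3 : a • ((-k) • u - g) = (-k) • (a • u) - a • g := by
    rw [smul_sub, smul_comm]
  rw [h3, map_sub, map_zsmul, hzero] at h2
  have h4 : (0:ℝ) ≤ φ (a • g) := hpos _ (hSM a ha g hg)
  simp at h2
  linarith
end

section
/- The subsemiring ℝ₊[x]_{(Σ)} of the homogeneous localization ℝ[x₁,…,xₙ]_{(Σ)} generated by the nonnegative reals and the fractions x₁/Σ, …, xₙ/Σ is archimedean, i.e. ℝ₊[x]_{(Σ)} + ℤ = ℝ[x]_{(Σ)}. -/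
open MvPolynomial

noncomputable section

/-- The field of rational functions in `n` variables over `ℝ`. -/
abbrev RatField (n : ℕ) := FractionRing (MvPolynomial (Fin n) ℝ)

/-- Inclusion of polynomials into the field of rational functions. -/
noncomputable def ι (n : ℕ) : MvPolynomial (Fin n) ℝ →+* RatField n :=
  algebraMap (MvPolynomial (Fin n) ℝ) (RatField n)

/-- The linear form `Σ = x₁ + ⋯ + xₙ`. -/
noncomputable def sigma (n : ℕ) : MvPolynomial (Fin n) ℝ := ∑ i, X i

/-- The subsemiring `ℝ₊[x]_{(Σ)}` of `ℝ[x]_{(Σ)}` generated by the nonnegative reals and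
the fractions `x₁/Σ, …, xₙ/Σ`. -/
noncomputable def posLoc (n : ℕ) : Subsemiring (RatField n) :=
  Subsemiring.closure
    ({a | ∃ c : ℝ, 0 ≤ c ∧ a = ι n (C c)} ∪ {a | ∃ i : Fin n, a = ι n (X i) / ι n (sigma n)})

/-!
For a subsemiring `S` of a ring, the elements `a` with `k + a ∈ S` and `k - a ∈ S` for some
`k : ℕ` form a subring, because `3kl ± ab` is a sum of products of `k ± a`, `l ± b`, `k` and `l`.
Each `tᵢ = xᵢ/Σ` lies in it since `1 - tᵢ = ∑_{j ≠ i} tⱼ`, and so does every real constant.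
A form `f` of degree `d` gives `f/Σ^d = f(t₁, …, tₙ)`, so it lies in that subring too.
-/

namespace Subsemiring

variable {A : Type*} [Ring A] (S : Subsemiring A)

def boundedSubring : Subring A where
  carrier := {a | ∃ k : ℕ, (k : A) + a ∈ S ∧ (k : A) - a ∈ S}
  zero_mem' := ⟨0, by simp⟩
  one_mem' := ⟨1, by simpa using add_mem S.one_mem S.one_mem, by simp⟩
  add_mem' := by
    rintro a b ⟨k, hak, hka⟩ ⟨l, hbl, hlb⟩
    refine ⟨k + l, ?_, ?_⟩
    · simpa only [Nat.cast_add, add_add_add_comm] using add_mem hak hbl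
    · simpa only [Nat.cast_add, add_sub_add_comm] using add_mem hka hlb
  neg_mem' := by
    rintro a ⟨k, hak, hka⟩
    exact ⟨k, by simpa only [sub_eq_add_neg] using hka, by simpa only [sub_neg_eq_add] using hak⟩
  mul_mem' := by
    rintro a b ⟨k, hak, hka⟩ ⟨l, hbl, hlb⟩
    have hk := natCast_mem S k
    have hl := natCast_mem S l
    refine ⟨3 * k * l, ?_, ?_⟩
    · have : ((3 * k * l : ℕ) : A) + a * b = (k + a) * (l + b) + k * (l - b) + l * (k - a) := by
        push_cast
        noncomm_ring
        simp only [Nat.cast_comm l]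
        abel
      rw [this]
      exact add_mem (add_mem (mul_mem hak hbl) (mul_mem hk hlb)) (mul_mem hl hka)
    · have : ((3 * k * l : ℕ) : A) - a * b = (k - a) * (l + b) + k * (l - b) + l * (k + a) := by
        push_cast
        noncomm_ring
        simp only [Nat.cast_comm l]
        abel
      rw [this]
      exact add_mem (add_mem (mul_mem hka hbl) (mul_mem hk hlb)) (mul_mem hl hak)

theorem one_sub_mem_of_sum_eq_one {κ : Type*} [Fintype κ] {t : κ → A} (ht : ∀ j, t j ∈ S)
    (hsum : ∑ j, t j = 1) (i : κ) : 1 - t i ∈ S := by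
  classical
  rw [← hsum, ← Finset.add_sum_erase _ _ (Finset.mem_univ i), add_sub_cancel_left]
  exact sum_mem fun j _ => ht j

end Subsemiring

theorem MvPolynomial.IsHomogeneous.eval₂_const_mul {R S σ : Type*} [CommSemiring R]
    [CommSemiring S] {f : MvPolynomial σ R} {d : ℕ} (hf : f.IsHomogeneous d) (φ : R →+* S)
    (c : S) (x : σ → S) :
    MvPolynomial.eval₂ φ (fun i => c * x i) f = c ^ d * MvPolynomial.eval₂ φ x f := by
  simp only [eval₂_eq, Finset.mul_sum]
  refine Finset.sum_congr rfl fun α hα => ?_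
  rw [hf.degree_eq_sum_deg_support hα, ← Finset.prod_pow_eq_pow_sum]
  simp only [mul_pow, Finset.prod_mul_distrib]
  ring

theorem ι_C_mem_posLoc {n : ℕ} {c : ℝ} (hc : 0 ≤ c) : ι n (C c) ∈ posLoc n :=
  Subsemiring.subset_closure (Or.inl ⟨c, hc, rfl⟩)

theorem div_sigma_mem_posLoc {n : ℕ} (i : Fin n) : ι n (X i) / ι n (sigma n) ∈ posLoc n :=
  Subsemiring.subset_closure (Or.inr ⟨i, rfl⟩)

theorem ι_sigma_ne_zero {n : ℕ} (hn : n ≠ 0) : ι n (sigma n) ≠ 0 := by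
  refine (map_ne_zero_iff _ (IsFractionRing.injective _ _)).mpr fun h => hn ?_
  simpa [sigma, eval_sum] using congrArg (eval fun _ => (1 : ℝ)) h

theorem sum_div_sigma {n : ℕ} (hn : n ≠ 0) : ∑ i, ι n (X i) / ι n (sigma n) = 1 := by
  rw [← Finset.sum_div, ← map_sum, ← sigma, div_self (ι_sigma_ne_zero hn)]

theorem ι_div_sigma_pow {n d : ℕ} {f : MvPolynomial (Fin n) ℝ} (hf : f.IsHomogeneous d) :
    ι n f / ι n (sigma n) ^ d
      = eval₂ ((ι n).comp C) (fun i => ι n (X i) / ι n (sigma n)) f := by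
  have hι : ι n f = eval₂ ((ι n).comp C) (fun i => ι n (X i)) f :=
    (congrArg _ (eval₂_eta f).symm).trans (eval₂_comp_left _ _ _ _)
  simp only [div_eq_inv_mul, hf.eval₂_const_mul, hι, inv_pow]

theorem ι_C_mem_boundedSubring {n : ℕ} (c : ℝ) : ι n (C c) ∈ (posLoc n).boundedSubring := by
  have hk : |c| ≤ ⌈|c|⌉₊ := Nat.le_ceil _
  refine ⟨⌈|c|⌉₊, ?_, ?_⟩
  · rw [← map_natCast (ι n), ← map_natCast C, ← map_add, ← map_add]
    exact ι_C_mem_posLoc (by linarith [neg_abs_le c])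
  · rw [← map_natCast (ι n), ← map_natCast C, ← map_sub, ← map_sub]
    exact ι_C_mem_posLoc (by linarith [le_abs_self c])

theorem div_sigma_mem_boundedSubring {n : ℕ} (i : Fin n) :
    ι n (X i) / ι n (sigma n) ∈ (posLoc n).boundedSubring := by
  refine ⟨1, ?_, ?_⟩ <;> rw [Nat.cast_one]
  · exact add_mem (one_mem _) (div_sigma_mem_posLoc i)
  · exact (posLoc n).one_sub_mem_of_sum_eq_one div_sigma_mem_posLoc (sum_div_sigma i.pos.ne') i

theorem posLoc_archimedean_general {n : ℕ} (a : RatField n)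
    (ha : ∃ (d : ℕ) (f : MvPolynomial (Fin n) ℝ), f.IsHomogeneous d ∧
      a = ι n f / (ι n (sigma n)) ^ d) :
    ∃ k : ℤ, (k : RatField n) + a ∈ posLoc n := by
  obtain ⟨d, f, hf, rfl⟩ := ha
  have hmem : ι n f / ι n (sigma n) ^ d ∈ (posLoc n).boundedSubring := by
    rw [ι_div_sigma_pow hf]
    exact eval₂_mem (fun _ _ => ι_C_mem_boundedSubring _) div_sigma_mem_boundedSubring
  obtain ⟨k, hk, -⟩ := hmem
  exact ⟨k, by exact_mod_cast hk⟩

/-- `ℝ₊[x]_{(Σ)}` is an archimedean subsemiring of the homogeneous localization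
`ℝ[x]_{(Σ)} = { f/Σ^d : f a form of degree d }`: `ℝ₊[x]_{(Σ)} + ℤ = ℝ[x]_{(Σ)}`. -/
theorem posLoc_archimedean {n : ℕ} (hn : 0 < n) (a : RatField n)
    (ha : ∃ (d : ℕ) (f : MvPolynomial (Fin n) ℝ), f.IsHomogeneous d ∧
      a = ι n f / (ι n (sigma n)) ^ d) :
    ∃ k : ℤ, (k : RatField n) + a ∈ posLoc n :=
  posLoc_archimedean_general a ha

end
end

section
/- (Pólya's Positivstellensatz) If a real form f ∈ ℝ[x₁,…,xₙ] is strictly positive at every point of the standard simplex Δₙ = {x : xᵢ ≥ 0, x₁+⋯+xₙ = 1}, then there exists a nonnegative integer m such that all coefficients of the polynomial (x₁+⋯+xₙ)^m · f are strictly positive. -/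
open MvPolynomial Finset

/-!
Pólya's argument. Let `f_t` be `f` with every monomial `x^β` replaced by the falling product
`∏ᵢ xᵢ (xᵢ - t) ⋯ (xᵢ - (βᵢ - 1) t)`. Expanding `(x₁ + ⋯ + xₙ)^N f` with the multinomial theorem
gives, for `|α| = d + N =: K`, the identity
`α! · coeff_α = N! · f_1(α) = N! · K^d · f_{1/K}(α / K)`.
The point `α / K` lies on the simplex, and there `f_t` differs from `f` by at most
`d² t ∑ |c_β|`, while `f ≥ ε > 0` by compactness. Hence every coefficient is positive as soon as
`N > d² ∑ |c_β| / ε`.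
-/

theorem abs_prod_sub_prod_le_sum {ι R : Type*} [CommRing R] [LinearOrder R] [IsStrictOrderedRing R]
    (s : Finset ι) {u v : ι → R} (hu : ∀ i ∈ s, |u i| ≤ 1) (hv : ∀ i ∈ s, |v i| ≤ 1) :
    |∏ i ∈ s, u i - ∏ i ∈ s, v i| ≤ ∑ i ∈ s, |u i - v i| := by
  induction s using Finset.cons_induction with
  | empty => simp
  | cons a s _ ih =>
    simp only [forall_mem_cons] at hu hv
    have hvs : |∏ i ∈ s, v i| ≤ 1 := by
      rw [abs_prod]; exact prod_le_one (fun _ _ ↦ abs_nonneg _) hv.2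
    rw [prod_cons, prod_cons, sum_cons]
    calc |u a * ∏ i ∈ s, u i - v a * ∏ i ∈ s, v i|
        = |u a * (∏ i ∈ s, u i - ∏ i ∈ s, v i) + (u a - v a) * ∏ i ∈ s, v i| := by
          congr 1; ring
      _ ≤ |u a| * |∏ i ∈ s, u i - ∏ i ∈ s, v i| + |u a - v a| * |∏ i ∈ s, v i| := by
        rw [← abs_mul, ← abs_mul]; exact abs_add_le _ _
      _ ≤ 1 * ∑ i ∈ s, |u i - v i| + |u a - v a| * 1 := by
        gcongr
        · exact hu.1
        · exact ih hu.2 hv.2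
      _ = |u a - v a| + ∑ i ∈ s, |u i - v i| := by ring

noncomputable def fallingPow (y t : ℝ) (b : ℕ) : ℝ :=
  ∏ j ∈ range b, (y - j * t)

section fallingPow

variable {y t : ℝ} {b : ℕ}

theorem natCast_fallingPow_one (a : ℕ) : fallingPow a 1 b = a.descFactorial b := by
  induction b with
  | zero => simp [fallingPow]
  | succ b ih =>
    rw [fallingPow, prod_range_succ, ← fallingPow, ih, Nat.descFactorial_succ, Nat.cast_mul,
      mul_comm, mul_one]
    rcases le_or_gt b a with hba | hab
    · rw [Nat.cast_sub hba]
    · simp [Nat.descFactorial_eq_zero_iff_lt.mpr hab]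

theorem fallingPow_mul (c : ℝ) : fallingPow (c * y) (c * t) b = c ^ b * fallingPow y t b := by
  have (j : ℕ) : c * y - j * (c * t) = (y - j * t) * c := by ring
  rw [fallingPow, fallingPow, prod_congr rfl fun j _ ↦ this j, prod_mul_distrib, prod_const,
    card_range, mul_comm]

theorem abs_sub_natCast_mul_le_one (hy : y ∈ Set.Icc 0 1) (ht : 0 ≤ t) (hbt : b * t ≤ 1)
    {j : ℕ} (hj : j ∈ range b) : |y - j * t| ≤ 1 := by
  have hjb : (j : ℝ) * t ≤ b * t := by gcongr; exact_mod_cast (mem_range.mp hj).le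
  have : 0 ≤ (j : ℝ) * t := by positivity
  rw [abs_le]; constructor <;> linarith [hy.1, hy.2]

theorem abs_fallingPow_le_one (hy : y ∈ Set.Icc 0 1) (ht : 0 ≤ t) (hbt : b * t ≤ 1) :
    |fallingPow y t b| ≤ 1 := by
  rw [fallingPow, abs_prod]
  exact prod_le_one (fun _ _ ↦ abs_nonneg _) fun _ hj ↦ abs_sub_natCast_mul_le_one hy ht hbt hj

theorem abs_fallingPow_sub_pow_le (hy : y ∈ Set.Icc 0 1) (ht : 0 ≤ t) (hbt : b * t ≤ 1) :
    |fallingPow y t b - y ^ b| ≤ b * (b * t) := by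
  have hy1 : |y| ≤ 1 := abs_le.mpr ⟨by linarith [hy.1], hy.2⟩
  calc |fallingPow y t b - y ^ b| = |∏ j ∈ range b, (y - j * t) - ∏ _j ∈ range b, y| := by
        rw [prod_const, card_range, fallingPow]
    _ ≤ ∑ j ∈ range b, |y - j * t - y| :=
        abs_prod_sub_prod_le_sum _ (fun _ hj ↦ abs_sub_natCast_mul_le_one hy ht hbt hj)
          fun _ _ ↦ hy1
    _ ≤ ∑ _j ∈ range b, b * t := by
        refine sum_le_sum fun j hj ↦ ?_
        rw [sub_sub_cancel_left, abs_neg, abs_of_nonneg (by positivity)]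
        gcongr; exact_mod_cast (mem_range.mp hj).le
    _ = b * (b * t) := by simp

end fallingPow

section fallingEval

variable {σ : Type*} [Fintype σ] {f : MvPolynomial σ ℝ} {d : ℕ}

noncomputable def fallingEval (t : ℝ) (x : σ → ℝ) (f : MvPolynomial σ ℝ) : ℝ :=
  ∑ β ∈ f.support, coeff β f * ∏ i, fallingPow (x i) t (β i)

theorem abs_prod_fallingPow_sub_prod_pow_le {x : σ → ℝ} {t : ℝ} {β : σ →₀ ℕ}
    (hx : ∀ i, x i ∈ Set.Icc 0 1) (ht : 0 ≤ t) (hdt : d * t ≤ 1) (hβ : β.degree ≤ d) :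
    |∏ i, fallingPow (x i) t (β i) - ∏ i, x i ^ β i| ≤ d * (d * t) := by
  have hβi (i : σ) : β i ≤ d := (Finsupp.le_degree i β).trans hβ
  have hβt (i : σ) : (β i : ℝ) * t ≤ 1 := le_trans (by gcongr; exact_mod_cast hβi i) hdt
  have hxi (i : σ) : |x i ^ β i| ≤ 1 := by
    rw [abs_pow]; exact pow_le_one₀ (abs_nonneg _) (abs_le.mpr ⟨by linarith [(hx i).1], (hx i).2⟩)
  calc |∏ i, fallingPow (x i) t (β i) - ∏ i, x i ^ β i|
      ≤ ∑ i, |fallingPow (x i) t (β i) - x i ^ β i| :=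
        abs_prod_sub_prod_le_sum _ (fun i _ ↦ abs_fallingPow_le_one (hx i) ht (hβt i))
          fun i _ ↦ hxi i
    _ ≤ ∑ i, (β i : ℝ) * (d * t) := sum_le_sum fun i _ ↦
        (abs_fallingPow_sub_pow_le (hx i) ht (hβt i)).trans (by gcongr; exact_mod_cast hβi i)
    _ = β.degree * (d * t) := by rw [← sum_mul, Finsupp.degree_eq_sum, Nat.cast_sum]
    _ ≤ d * (d * t) := by gcongr

theorem abs_fallingEval_sub_eval_le {x : σ → ℝ} {t : ℝ}
    (hx : ∀ i, x i ∈ Set.Icc 0 1) (ht : 0 ≤ t) (hdt : d * t ≤ 1) (hf : f.totalDegree ≤ d) :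
    |fallingEval t x f - eval x f| ≤ (∑ β ∈ f.support, |coeff β f|) * (d * (d * t)) := by
  rw [fallingEval, eval_eq', ← sum_sub_distrib, sum_mul]
  refine (abs_sum_le_sum_abs _ _).trans (sum_le_sum fun β hβ ↦ ?_)
  rw [← mul_sub, abs_mul]
  gcongr
  exact abs_prod_fallingPow_sub_prod_pow_le hx ht hdt ((le_totalDegree hβ).trans hf)

theorem fallingEval_mul_of_isHomogeneous (hf : f.IsHomogeneous d) (c t : ℝ) (x : σ → ℝ) :
    fallingEval (c * t) (fun i ↦ c * x i) f = c ^ d * fallingEval t x f := by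
  rw [fallingEval, fallingEval, mul_sum]
  refine sum_congr rfl fun β hβ ↦ ?_
  have hβd : ∑ i, β i = d := by
    rw [← Finsupp.degree_eq_sum]; exact (hf.degree_eq_sum_deg_support hβ).symm
  simp_rw [fallingPow_mul, prod_mul_distrib, prod_pow_eq_pow_sum, hβd]
  ring

open Nat in
theorem prod_factorial_mul_multinomial_tsub {α β : σ →₀ ℕ} (h : β ≤ α) :
    (∏ i, (α i)!) * (α - β).multinomial = (α - β).degree ! * ∏ i, (α i).descFactorial (β i) := by
  have hfac : ∏ i, (α i)! = (∏ i, ((α - β) i)!) * ∏ i, (α i).descFactorial (β i) := by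
    rw [← prod_mul_distrib]
    exact prod_congr rfl fun i _ ↦ by rw [Finsupp.tsub_apply, factorial_mul_descFactorial (h i)]
  rw [hfac, mul_right_comm, ← Finsupp.multinomial_of_support_subset (subset_univ _),
    multinomial_spec, Finsupp.degree_eq_sum]

open Nat in
theorem prod_factorial_mul_coeff_sum_X_pow_mul (hf : f.IsHomogeneous d) {N : ℕ} {α : σ →₀ ℕ}
    (hα : α.degree = d + N) :
    (∏ i, ((α i)! : ℝ)) * coeff α ((∑ i, X i) ^ N * f) =
      N ! * fallingEval 1 (fun i ↦ (α i : ℝ)) f := by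
  conv_lhs => rw [← support_sum_monomial_coeff f, mul_sum, coeff_sum, mul_sum]
  rw [fallingEval, mul_sum]
  refine sum_congr rfl fun β hβ ↦ ?_
  simp only [natCast_fallingPow_one, coeff_mul_monomial']
  split_ifs with hβα
  · have hβd : β.degree = d := (hf.degree_eq_sum_deg_support hβ).symm
    have hN : (α - β).degree = N := by
      have := map_add Finsupp.degree (α - β) β
      rw [tsub_add_cancel_of_le hβα, hα, hβd] at this
      omega
    rw [coeff_sum_X_pow_of_fintype, if_pos (show (α - β).sum (fun _ m ↦ m) = N from hN)]
    have := congrArg (Nat.cast : ℕ → ℝ) (prod_factorial_mul_multinomial_tsub hβα)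
    push_cast at this
    rw [hN] at this
    linear_combination coeff β f * this
  · obtain ⟨i, hi⟩ : ∃ i, α i < β i := by simpa [Finsupp.le_def] using hβα
    rw [mul_zero, prod_eq_zero (mem_univ i) (by simp [Nat.descFactorial_eq_zero_iff_lt.mpr hi]),
      mul_zero, mul_zero]

theorem mem_stdSimplex_div_degree {α : σ →₀ ℕ} (hα : 0 < α.degree) :
    (fun i ↦ (α i : ℝ) / α.degree) ∈ stdSimplex ℝ σ := by
  refine ⟨fun i ↦ by positivity, ?_⟩
  rw [← sum_div, ← Nat.cast_sum, ← Finsupp.degree_eq_sum, div_self (by positivity)]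

end fallingEval

theorem polya_positivstellensatz_general {n : ℕ} {d : ℕ}
    (f : MvPolynomial (Fin n) ℝ) (hf : f.IsHomogeneous d)
    (hpos : ∀ x : Fin n → ℝ, (∀ i, 0 ≤ x i) → (∑ i, x i) = 1 → 0 < eval x f) :
    ∃ m : ℕ, ∀ α : Fin n →₀ ℕ, (α.sum fun _ e => e) = d + m →
      0 < coeff α ((∑ i, (X i : MvPolynomial (Fin n) ℝ)) ^ m * f) := by
  obtain ⟨ε, hε, hεf⟩ := (isCompact_stdSimplex ℝ (Fin n)).exists_forall_le'
    (continuous_eval f).continuousOn fun x hx ↦ hpos x hx.1 hx.2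
  set A := ∑ β ∈ f.support, |coeff β f|
  obtain ⟨N, hN⟩ := exists_nat_gt (A * d * d / ε)
  have hN0 : (0 : ℝ) < N := lt_of_le_of_lt (by positivity) hN
  refine ⟨N, fun α (hα : α.degree = d + N) ↦ ?_⟩
  set K : ℝ := (α.degree : ℝ)
  have hK : K = d + N := by simp [K, hα]
  have hK0 : 0 < K := by rw [hK]; positivity
  set x := fun i ↦ (α i : ℝ) / K
  have hx : x ∈ stdSimplex ℝ (Fin n) := mem_stdSimplex_div_degree (Nat.cast_pos.mp hK0)
  have herr := abs_fallingEval_sub_eval_le (mem_Icc_of_mem_stdSimplex hx) (t := 1 / K)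
    (by positivity) (by rw [mul_one_div, div_le_one hK0, hK]; linarith) hf.totalDegree_le
  have hsmall : A * (d * (d * (1 / K))) < ε := by
    rw [div_lt_iff₀ hε] at hN
    rw [show A * (d * (d * (1 / K))) = A * d * d / K by ring, div_lt_iff₀ hK0, hK]
    nlinarith
  have hfalling : 0 < fallingEval (1 / K) x f := by
    linarith [(abs_le.mp herr).1, hεf x hx]
  have hcoeff : (∏ i, ((α i).factorial : ℝ)) * coeff α ((∑ i, X i) ^ N * f) =
      N.factorial * (K ^ d * fallingEval (1 / K) x f) := by
    rw [prod_factorial_mul_coeff_sum_X_pow_mul hf hα, ← fallingEval_mul_of_isHomogeneous hf]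
    simp only [x, mul_one_div_cancel hK0.ne', mul_div_cancel₀ _ hK0.ne']
  refine pos_of_mul_pos_right ?_ (by positivity : (0 : ℝ) ≤ ∏ i, ((α i).factorial : ℝ))
  rw [hcoeff]
  positivity

/-- Pólya's Positivstellensatz: if a real form `f` is strictly positive on the standard
simplex, then all coefficients (with respect to monomials of degree `deg f + m`) of
`(x₁ + ⋯ + xₙ)^m * f` are strictly positive for some `m`. -/
theorem polya_positivstellensatz {n : ℕ} (hn : 0 < n) {d : ℕ}
    (f : MvPolynomial (Fin n) ℝ) (hf : f.IsHomogeneous d)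
    (hpos : ∀ x : Fin n → ℝ, (∀ i, 0 ≤ x i) → (∑ i, x i) = 1 → 0 < eval x f) :
    ∃ m : ℕ, ∀ α : Fin n →₀ ℕ, (α.sum fun _ e => e) = d + m →
      0 < coeff α ((∑ i, (X i : MvPolynomial (Fin n) ℝ)) ^ m * f) :=
  polya_positivstellensatz_general f hf hpos
end
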